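/- arXiv:1612.02458 — 5 statements merged into one kernel-verified Lean document; each statement's English description precedes it below -/
import Mathlib

section
/- If g : ℝ → ℝ is twice differentiable with g' nonvanishing on an interval and satisfies g''/g' = 2c₁²·g·g'/(1 + c₁²g²) for a constant c₁ ≠ 0, then there exist constants c₂ ≠ 0 and c₃ with g(z) = (1/c₁)·tan(c₂ z + c₃). -/
/-!
Since `g' ≠ 0`, the equation says `(c₁ g' / (1 + (c₁ g)²))' = 0`. The bracket is the derivative of
`arctan (c₁ g)`, so `arctan (c₁ g)` has constant nonzero derivative `c₂` on the interval, i.e.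
`arctan (c₁ g z) = c₂ z + c₃`; applying `tan` gives the claim.
-/

open Real Set

lemma exists_eq_mul_add_of_hasDerivAt_const {f : ℝ → ℝ} {c : ℝ} {s : Set ℝ} (hs : IsOpen s)
    (hs' : IsPreconnected s) (hf : ∀ z ∈ s, HasDerivAt f c z) :
    ∃ d, ∀ z ∈ s, f z = c * z + d :=
  hs.exists_eq_add_of_deriv_eq hs' (fun z hz => (hf z hz).differentiableAt.differentiableWithinAt)
    (differentiable_id.const_mul c).differentiableOn
    (fun z hz => by simp [(hf z hz).deriv])

lemma hasDerivAt_arctan_const_mul {g : ℝ → ℝ} {g' c z : ℝ} (hg : HasDerivAt g g' z) :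
    HasDerivAt (fun z => arctan (c * g z)) (c * g' / (1 + (c * g z) ^ 2)) z := by
  convert (hg.const_mul c).arctan using 1
  ring

lemma hasDerivAt_first_integral_eq_zero {g : ℝ → ℝ} {c z : ℝ} (hg : DifferentiableAt ℝ g z)
    (hg' : DifferentiableAt ℝ (deriv g) z) (hne : deriv g z ≠ 0)
    (hode : deriv (deriv g) z / deriv g z
      = 2 * c ^ 2 * g z * deriv g z / (1 + c ^ 2 * g z ^ 2)) :
    HasDerivAt (fun z => c * deriv g z / (1 + (c * g z) ^ 2)) 0 z := by
  have hden : 1 + (c * g z) ^ 2 ≠ 0 := by positivity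
  have hg'' : deriv (deriv g) z = 2 * c ^ 2 * g z * deriv g z ^ 2 / (1 + (c * g z) ^ 2) := by
    rw [div_eq_iff hne] at hode
    rw [hode]
    ring
  have hden' : HasDerivAt (fun z => 1 + (c * g z) ^ 2) (2 * (c * g z) * (c * deriv g z)) z := by
    simpa using ((hg.hasDerivAt.const_mul c).pow 2).const_add 1
  refine ((hg'.hasDerivAt.const_mul c).div hden' hden).congr_deriv ?_
  rw [hg'']
  field_simp
  ring

/-- If `g` is twice differentiable with nonvanishing derivative on an open interval and
satisfies `g''/g' = 2 c₁² g g' / (1 + c₁² g²)` with `c₁ ≠ 0`, then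
`g z = (1/c₁) * tan (c₂ z + c₃)` for some `c₂ ≠ 0`, `c₃`. -/
theorem stmt_1 (a b : ℝ) (hab : a < b) (c₁ : ℝ) (hc₁ : c₁ ≠ 0) (g : ℝ → ℝ)
    (hg : ∀ z ∈ Set.Ioo a b, DifferentiableAt ℝ g z)
    (hg' : ∀ z ∈ Set.Ioo a b, DifferentiableAt ℝ (deriv g) z)
    (hg'ne : ∀ z ∈ Set.Ioo a b, deriv g z ≠ 0)
    (hode : ∀ z ∈ Set.Ioo a b,
      deriv (deriv g) z / deriv g z
        = 2 * c₁ ^ 2 * g z * deriv g z / (1 + c₁ ^ 2 * (g z) ^ 2)) :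
    ∃ c₂ : ℝ, c₂ ≠ 0 ∧ ∃ c₃ : ℝ, ∀ z ∈ Set.Ioo a b,
      g z = (1 / c₁) * Real.tan (c₂ * z + c₃) := by
  obtain ⟨c₂, hc₂⟩ := exists_eq_mul_add_of_hasDerivAt_const isOpen_Ioo isPreconnected_Ioo
    fun z hz => hasDerivAt_first_integral_eq_zero (hg z hz) (hg' z hz) (hg'ne z hz) (hode z hz)
  simp only [zero_mul, zero_add] at hc₂
  have hmid : (a + b) / 2 ∈ Ioo a b := ⟨by linarith, by linarith⟩
  have hc₂ne : c₂ ≠ 0 := by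
    rw [← hc₂ _ hmid]
    exact div_ne_zero (mul_ne_zero hc₁ (hg'ne _ hmid)) (by positivity)
  obtain ⟨c₃, hc₃⟩ := exists_eq_mul_add_of_hasDerivAt_const isOpen_Ioo isPreconnected_Ioo
    fun z hz => hc₂ z hz ▸ hasDerivAt_arctan_const_mul (c := c₁) (hg z hz).hasDerivAt
  refine ⟨c₂, hc₂ne, c₃, fun z hz => ?_⟩
  rw [← hc₃ z hz, tan_arctan]
  field_simp
end

section
/- Suppose f, g are twice differentiable real functions on intervals with f, f', g, g', f'', g'' all nonvanishing, satisfying f(y)·g(z)·f''(y)·g''(z) = (f'(y))²(g'(z))² for all (y,z). Then there exists a constant c₁ ≠ 0 such that f f'' = c₁ (f')² and g g'' = (1/c₁)(g')² hold identically. -/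
/-!
Dividing by `(f')² (g')²`, the equation says `(f f''/f'²)(y) · (g g''/g'²)(z) = 1` for all `y, z`,
so both factors are constant.
-/

theorem exists_const_of_mul_eq_mul {K α β : Type*} [Field K] {s : Set α} {t : Set β}
    {P R : α → K} {Q S : β → K} (h : ∀ x ∈ s, ∀ y ∈ t, P x * Q y = R x * S y)
    {x₀ : α} {y₀ : β} (hx₀ : x₀ ∈ s) (hy₀ : y₀ ∈ t)
    (hR : R x₀ ≠ 0) (hQ : Q y₀ ≠ 0) (hS : S y₀ ≠ 0) :
    ∃ c : K, c ≠ 0 ∧ (∀ x ∈ s, P x = c * R x) ∧ ∀ y ∈ t, Q y = c⁻¹ * S y := by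
  have hP : ∀ x ∈ s, P x = S y₀ / Q y₀ * R x := fun x hx => by
    field_simp
    linear_combination h x hx y₀ hy₀
  refine ⟨S y₀ / Q y₀, div_ne_zero hS hQ, hP, fun y hy => ?_⟩
  have hQy : S y₀ * Q y = Q y₀ * S y := mul_left_cancel₀ hR <| by
    linear_combination Q y₀ * h x₀ hx₀ y hy - Q y * h x₀ hx₀ y₀ hy₀
  field_simp
  linear_combination hQy

theorem stmt_4_general (a b c d : ℝ) (hab : a < b) (hcd : c < d) (f g : ℝ → ℝ)
    (hf'ne : ∀ y ∈ Set.Ioo a b, deriv f y ≠ 0)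
    (hgne : ∀ z ∈ Set.Ioo c d, g z ≠ 0)
    (hg'ne : ∀ z ∈ Set.Ioo c d, deriv g z ≠ 0)
    (hg''ne : ∀ z ∈ Set.Ioo c d, deriv (deriv g) z ≠ 0)
    (heq : ∀ y ∈ Set.Ioo a b, ∀ z ∈ Set.Ioo c d,
      f y * g z * deriv (deriv f) y * deriv (deriv g) z
        = (deriv f y) ^ 2 * (deriv g z) ^ 2) :
    ∃ c₁ : ℝ, c₁ ≠ 0 ∧
      (∀ y ∈ Set.Ioo a b, f y * deriv (deriv f) y = c₁ * (deriv f y) ^ 2) ∧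
      (∀ z ∈ Set.Ioo c d, g z * deriv (deriv g) z = (1 / c₁) * (deriv g z) ^ 2) := by
  obtain ⟨y₀, hy₀⟩ := Set.nonempty_Ioo.2 hab
  obtain ⟨z₀, hz₀⟩ := Set.nonempty_Ioo.2 hcd
  have hsep : ∀ y ∈ Set.Ioo a b, ∀ z ∈ Set.Ioo c d,
      f y * deriv (deriv f) y * (g z * deriv (deriv g) z)
        = (deriv f y) ^ 2 * (deriv g z) ^ 2 := fun y hy z hz => by
    linear_combination heq y hy z hz
  simpa only [one_div] using exists_const_of_mul_eq_mul hsep hy₀ hz₀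
    (pow_ne_zero 2 (hf'ne y₀ hy₀)) (mul_ne_zero (hgne z₀ hz₀) (hg''ne z₀ hz₀))
    (pow_ne_zero 2 (hg'ne z₀ hz₀))

/-- If `f, g` are twice differentiable with `f, f', f'', g, g', g''` all nonvanishing and
`f g f'' g'' = (f')² (g')²` holds for all `(y, z)`, then there is a constant
`c₁ ≠ 0` with `f f'' = c₁ (f')²` and `g g'' = (1/c₁) (g')²` identically. -/
theorem stmt_4 (a b c d : ℝ) (hab : a < b) (hcd : c < d) (f g : ℝ → ℝ)
    (hf : ∀ y ∈ Set.Ioo a b, DifferentiableAt ℝ f y)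
    (hf' : ∀ y ∈ Set.Ioo a b, DifferentiableAt ℝ (deriv f) y)
    (hg : ∀ z ∈ Set.Ioo c d, DifferentiableAt ℝ g z)
    (hg' : ∀ z ∈ Set.Ioo c d, DifferentiableAt ℝ (deriv g) z)
    (hfne : ∀ y ∈ Set.Ioo a b, f y ≠ 0)
    (hf'ne : ∀ y ∈ Set.Ioo a b, deriv f y ≠ 0)
    (hf''ne : ∀ y ∈ Set.Ioo a b, deriv (deriv f) y ≠ 0)
    (hgne : ∀ z ∈ Set.Ioo c d, g z ≠ 0)
    (hg'ne : ∀ z ∈ Set.Ioo c d, deriv g z ≠ 0)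
    (hg''ne : ∀ z ∈ Set.Ioo c d, deriv (deriv g) z ≠ 0)
    (heq : ∀ y ∈ Set.Ioo a b, ∀ z ∈ Set.Ioo c d,
      f y * g z * deriv (deriv f) y * deriv (deriv g) z
        = (deriv f y) ^ 2 * (deriv g z) ^ 2) :
    ∃ c₁ : ℝ, c₁ ≠ 0 ∧
      (∀ y ∈ Set.Ioo a b, f y * deriv (deriv f) y = c₁ * (deriv f y) ^ 2) ∧
      (∀ z ∈ Set.Ioo c d, g z * deriv (deriv g) z = (1 / c₁) * (deriv g z) ^ 2) :=
  stmt_4_general a b c d hab hcd f g hf'ne hgne hg'ne hg''ne heq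
end

section
/- Let K₀ ≠ 0 and c₁ ≠ 0 be real constants. If f is differentiable, nonvanishing, and satisfies K₀ c₁² = −(f'/f²)² on an interval, then K₀ < 0 and there exists a constant c₃ with f(y) = 1/(± c₁ √(−K₀) y + c₃). -/
/-!
By the chain rule the equation says that `g = 1/f` has `(g')² = -K₀ c₁²`, a nonzero constant.
A derivative cannot change sign on an interval without vanishing (Darboux), so `g'` itself is
constant and `g` is affine with slope `m`, `m² = -K₀ c₁²`. Hence `K₀ < 0` and
`m = ± c₁ √(-K₀)`.
-/

open Set

theorem Convex.eq_of_hasDerivWithinAt_of_sq_eq {s : Set ℝ} (hs : Convex ℝ s) {f f' : ℝ → ℝ}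
    {k : ℝ} (hk : k ≠ 0) (hf : ∀ x ∈ s, HasDerivWithinAt f (f' x) s x)
    (hsq : ∀ x ∈ s, f' x ^ 2 = k) {x y : ℝ} (hx : x ∈ s) (hy : y ∈ s) : f' x = f' y := by
  have hne : ∀ z ∈ s, f' z ≠ 0 := fun z hz h0 => hk (by rw [← hsq z hz, h0, sq, zero_mul])
  rcases sq_eq_sq_iff_eq_or_eq_neg.mp ((hsq x hx).trans (hsq y hy).symm) with h | h
  · exact h
  · rcases hasDerivWithinAt_forall_lt_or_forall_gt_of_forall_ne hs hf hne with hlt | hgt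
    · linarith [hlt x hx, hlt y hy]
    · linarith [hgt x hx, hgt y hy]

theorem IsOpen.exists_eqOn_affine_of_sq_deriv_eq {s : Set ℝ} (hso : IsOpen s) (hs : Convex ℝ s)
    (hne : s.Nonempty) {f : ℝ → ℝ} {k : ℝ} (hk : k ≠ 0) (hf : DifferentiableOn ℝ f s)
    (hsq : ∀ x ∈ s, deriv f x ^ 2 = k) :
    ∃ m, m ^ 2 = k ∧ ∃ c, s.EqOn f (fun x => m * x + c) := by
  obtain ⟨x₀, hx₀⟩ := hne
  have hderiv : ∀ x ∈ s, HasDerivWithinAt f (deriv f x) s x := fun x hx =>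
    ((hf x hx).differentiableAt (hso.mem_nhds hx)).hasDerivAt.hasDerivWithinAt
  refine ⟨deriv f x₀, hsq x₀ hx₀, hso.exists_eq_add_of_deriv_eq hs.isPreconnected hf
    (differentiableOn_id.const_mul _) fun x hx => ?_⟩
  have hlin : HasDerivAt (fun y => deriv f x₀ * y) (deriv f x₀) x := by
    simpa using (hasDerivAt_id' x).const_mul (deriv f x₀)
  exact (hs.eq_of_hasDerivWithinAt_of_sq_eq hk hderiv hsq hx hx₀).trans hlin.deriv.symm

theorem exists_sign_mul_eq_of_sq_eq_sq {m r : ℝ} (h : m ^ 2 = r ^ 2) :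
    ∃ ε : ℝ, (ε = 1 ∨ ε = -1) ∧ m = ε * r := by
  rcases sq_eq_sq_iff_eq_or_eq_neg.mp h with h | h
  · exact ⟨1, Or.inl rfl, by rw [h, one_mul]⟩
  · exact ⟨-1, Or.inr rfl, by rw [h, neg_one_mul]⟩

/-- If `K₀ ≠ 0`, `c₁ ≠ 0`, `f` is differentiable and nonvanishing with
`K₀ c₁² = -(f'/f²)²` on an interval, then `K₀ < 0` and
`f y = 1 / (± c₁ √(-K₀) y + c₃)` for some constant `c₃`. -/
theorem stmt_7 (K₀ c₁ : ℝ) (hK₀ : K₀ ≠ 0) (hc₁ : c₁ ≠ 0) (a b : ℝ) (hab : a < b)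
    (f : ℝ → ℝ)
    (hf : ∀ y ∈ Set.Ioo a b, DifferentiableAt ℝ f y)
    (hfne : ∀ y ∈ Set.Ioo a b, f y ≠ 0)
    (heq : ∀ y ∈ Set.Ioo a b, K₀ * c₁ ^ 2 = -(deriv f y / (f y) ^ 2) ^ 2) :
    K₀ < 0 ∧ ∃ ε : ℝ, (ε = 1 ∨ ε = -1) ∧ ∃ c₃ : ℝ, ∀ y ∈ Set.Ioo a b,
      f y = 1 / (ε * c₁ * Real.sqrt (-K₀) * y + c₃) := by
  have hinv : ∀ y ∈ Ioo a b, HasDerivAt (fun t => (f t)⁻¹) (-deriv f y / f y ^ 2) y :=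
    fun y hy => (hf y hy).hasDerivAt.fun_inv (hfne y hy)
  have hk : -(K₀ * c₁ ^ 2) ≠ 0 := neg_ne_zero.mpr (mul_ne_zero hK₀ (pow_ne_zero 2 hc₁))
  obtain ⟨m, hm, c₃, hc₃⟩ := isOpen_Ioo.exists_eqOn_affine_of_sq_deriv_eq (convex_Ioo a b)
    (nonempty_Ioo.mpr hab) hk (fun y hy => (hinv y hy).differentiableAt.differentiableWithinAt)
    fun y hy => by rw [(hinv y hy).deriv, heq y hy, neg_div, neg_sq, neg_neg]
  have hK₀neg : K₀ < 0 := by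
    have hm_pos : 0 < m ^ 2 := (sq_nonneg m).lt_of_ne (hm ▸ hk).symm
    nlinarith [sq_pos_of_ne_zero hc₁]
  have hr : m ^ 2 = (c₁ * Real.sqrt (-K₀)) ^ 2 := by
    rw [hm, mul_pow, Real.sq_sqrt (neg_nonneg.mpr hK₀neg.le)]
    ring
  obtain ⟨ε, hε, rfl⟩ := exists_sign_mul_eq_of_sq_eq_sq hr
  refine ⟨hK₀neg, ε, hε, c₃, fun y hy => ?_⟩
  rw [mul_assoc ε c₁, one_div, ← inv_inv (f y)]
  exact congrArg Inv.inv (hc₃ hy)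
end

section
/- The surface x = y·tan(cz) (i.e., f(y) = y, g(z) = tan(cz), c ≠ 0) satisfies the isotropic minimality equation ((f'g)² + 1)g'' + g(g')²(f f'' − 2(f')²) = 0 wherever tan(cz) is defined. -/
/-! With `g = tan (c ·)` one has `g' = c (1 + g²)` and `g'' = 2 c² g (1 + g²)`, while `f' = 1`,
`f'' = 0`; the equation becomes `(g² + 1) · 2 c² g (1 + g²) - 2 g c² (1 + g²)² = 0`. -/

open Real Filter Topology

lemma Real.hasDerivAt_tan_of_cos_ne_zero {x : ℝ} (h : cos x ≠ 0) :
    HasDerivAt tan (1 + tan x ^ 2) x := by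
  simpa only [one_div, ← inv_one_add_tan_sq h, inv_inv] using hasDerivAt_tan h

lemma hasDerivAt_tan_const_mul (c : ℝ) {z : ℝ} (h : cos (c * z) ≠ 0) :
    HasDerivAt (fun s => tan (c * s)) (c * (1 + tan (c * z) ^ 2)) z := by
  have hlin : HasDerivAt (fun s => c * s) c z := by simpa using (hasDerivAt_id z).const_mul c
  rw [mul_comm]
  exact (hasDerivAt_tan_of_cos_ne_zero h).comp z hlin

lemma deriv_tan_const_mul_eventuallyEq (c : ℝ) {z : ℝ} (h : cos (c * z) ≠ 0) :
    deriv (fun s => tan (c * s)) =ᶠ[𝓝 z] fun s => c * (1 + tan (c * s) ^ 2) := by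
  have hcos : Continuous fun s => cos (c * s) := by fun_prop
  filter_upwards [hcos.continuousAt.eventually_ne h] with s hs
  exact (hasDerivAt_tan_const_mul c hs).deriv

lemma deriv_deriv_tan_const_mul (c : ℝ) {z : ℝ} (h : cos (c * z) ≠ 0) :
    deriv (deriv fun s => tan (c * s)) z = 2 * c ^ 2 * tan (c * z) * (1 + tan (c * z) ^ 2) := by
  rw [(deriv_tan_const_mul_eventuallyEq c h).deriv_eq]
  have h' : HasDerivAt (fun s => c * (1 + tan (c * s) ^ 2))
      (c * (2 * tan (c * z) * (c * (1 + tan (c * z) ^ 2)))) z := by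
    simpa using (((hasDerivAt_tan_const_mul c h).fun_pow 2).const_add 1).const_mul c
  rw [h'.deriv]
  ring

theorem stmt_16_general (c : ℝ) :
    ∀ y z : ℝ, Real.cos (c * z) ≠ 0 →
      ((deriv (fun t : ℝ => t) y * Real.tan (c * z)) ^ 2 + 1)
          * deriv (deriv (fun s : ℝ => Real.tan (c * s))) z
        + Real.tan (c * z) * (deriv (fun s : ℝ => Real.tan (c * s)) z) ^ 2
          * (y * deriv (deriv (fun t : ℝ => t)) y
            - 2 * (deriv (fun t : ℝ => t) y) ^ 2) = 0 := by
  intro y z hz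
  rw [deriv_deriv_tan_const_mul c hz, (hasDerivAt_tan_const_mul c hz).deriv, deriv_id'',
    deriv_const]
  ring

/-- The surface `x = y tan (c z)`, i.e. `f y = y`, `g z = tan (c z)` with `c ≠ 0`,
satisfies the isotropic minimality equation
`((f'g)² + 1) g'' + g (g')² (f f'' - 2 (f')²) = 0` wherever `cos (c z) ≠ 0`. -/
theorem stmt_16 (c : ℝ) (hc : c ≠ 0) :
    ∀ y z : ℝ, Real.cos (c * z) ≠ 0 →
      ((deriv (fun t : ℝ => t) y * Real.tan (c * z)) ^ 2 + 1)
          * deriv (deriv (fun s : ℝ => Real.tan (c * s))) z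
        + Real.tan (c * z) * (deriv (fun s : ℝ => Real.tan (c * s)) z) ^ 2
          * (y * deriv (deriv (fun t : ℝ => t)) y
            - 2 * (deriv (fun t : ℝ => t) y) ^ 2) = 0 :=
  stmt_16_general c
end

section
/- Let c₁ ≠ 0 with f(y) = c₁y^{c₂} and g(z) = c₃z^{c₄} where c₂ + c₄ = 1 and c₂c₄ ≠ 0. Then f g f'' g'' − (f' g')² = 0 for all y, z > 0; i.e., the surface x = c·y^{c₂}z^{c₄} is isotropic flat. -/
/-! For `f = c t^p` both `f f''` and `f'²` are multiples of `(c t^{p-1})²`, with coefficients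
`p (p - 1)` and `p²`. So `f g f'' g'' - (f' g')²` is `(c₂ (c₂ - 1) c₄ (c₄ - 1) - c₂² c₄²)` times a
square, and `(c₂ - 1)(c₄ - 1) = c₂ c₄` exactly when `c₂ + c₄ = 1`. -/

open Real

theorem deriv_const_mul_rpow (c p : ℝ) {y : ℝ} (hy : y ≠ 0) :
    deriv (fun t : ℝ => c * t ^ p) y = c * p * y ^ (p - 1) := by
  rw [(((hasDerivAt_rpow_const (Or.inl hy)).const_mul c)).deriv]
  ring

theorem deriv_deriv_const_mul_rpow (c p : ℝ) {y : ℝ} (hy : y ≠ 0) :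
    deriv (deriv (fun t : ℝ => c * t ^ p)) y = c * p * (p - 1) * y ^ (p - 2) := by
  have hderiv : deriv (fun t : ℝ => c * t ^ p) =ᶠ[nhds y] fun t => c * p * t ^ (p - 1) := by
    filter_upwards [isOpen_ne.mem_nhds hy] with t ht
    exact deriv_const_mul_rpow c p ht
  rw [hderiv.deriv_eq, deriv_const_mul_rpow (c * p) (p - 1) hy]
  ring_nf

theorem rpow_mul_rpow_sub_two {y : ℝ} (hy : 0 < y) (p : ℝ) :
    y ^ p * y ^ (p - 2) = (y ^ (p - 1)) ^ 2 := by
  rw [← rpow_add hy, ← rpow_mul_natCast hy.le]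
  ring_nf

theorem const_mul_rpow_mul_deriv_deriv (c p : ℝ) {y : ℝ} (hy : 0 < y) :
    c * y ^ p * deriv (deriv (fun t : ℝ => c * t ^ p)) y
      = p * (p - 1) * (c * y ^ (p - 1)) ^ 2 := by
  rw [deriv_deriv_const_mul_rpow c p hy.ne']
  linear_combination c ^ 2 * p * (p - 1) * rpow_mul_rpow_sub_two hy p

theorem deriv_const_mul_rpow_sq (c p : ℝ) {y : ℝ} (hy : y ≠ 0) :
    deriv (fun t : ℝ => c * t ^ p) y ^ 2 = p ^ 2 * (c * y ^ (p - 1)) ^ 2 := by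
  rw [deriv_const_mul_rpow c p hy]
  ring

theorem stmt_18_general (c₁ c₂ c₃ c₄ : ℝ)
    (hsum : c₂ + c₄ = 1) :
    ∀ y : ℝ, 0 < y → ∀ z : ℝ, 0 < z →
      (c₁ * y ^ c₂) * (c₃ * z ^ c₄)
          * deriv (deriv (fun t : ℝ => c₁ * t ^ c₂)) y
          * deriv (deriv (fun s : ℝ => c₃ * s ^ c₄)) z
        - (deriv (fun t : ℝ => c₁ * t ^ c₂) y
            * deriv (fun s : ℝ => c₃ * s ^ c₄) z) ^ 2 = 0 := by
  intro y hy z hz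
  have hf := const_mul_rpow_mul_deriv_deriv c₁ c₂ hy
  have hg := const_mul_rpow_mul_deriv_deriv c₃ c₄ hz
  have hf' := deriv_const_mul_rpow_sq c₁ c₂ hy.ne'
  have hg' := deriv_const_mul_rpow_sq c₃ c₄ hz.ne'
  set u := c₁ * y ^ (c₂ - 1)
  set v := c₃ * z ^ (c₄ - 1)
  have hcoef : c₂ * (c₂ - 1) * (c₄ * (c₄ - 1)) = c₂ ^ 2 * c₄ ^ 2 := by
    rw [show c₂ - 1 = -c₄ by linarith, show c₄ - 1 = -c₂ by linarith]
    ring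
  calc _ = (c₁ * y ^ c₂ * deriv (deriv (fun t : ℝ => c₁ * t ^ c₂)) y)
          * (c₃ * z ^ c₄ * deriv (deriv (fun s : ℝ => c₃ * s ^ c₄)) z)
          - deriv (fun t : ℝ => c₁ * t ^ c₂) y ^ 2 * deriv (fun s : ℝ => c₃ * s ^ c₄) z ^ 2 := by
        ring
    _ = (c₂ * (c₂ - 1) * (c₄ * (c₄ - 1)) - c₂ ^ 2 * c₄ ^ 2) * u ^ 2 * v ^ 2 := by
        rw [hf, hg, hf', hg']
        ring
    _ = 0 := by rw [hcoef, sub_self, zero_mul, zero_mul]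

/-- With `f y = c₁ y^{c₂}` and `g z = c₃ z^{c₄}`, `c₁, c₃ ≠ 0`, `c₂ + c₄ = 1`,
`c₂ c₄ ≠ 0`, we have `f g f'' g'' - (f' g')² = 0` for all `y, z > 0`; i.e. the
surface `x = c y^{c₂} z^{c₄}` is isotropic flat. -/
theorem stmt_18 (c₁ c₂ c₃ c₄ : ℝ) (hc₁ : c₁ ≠ 0) (hc₃ : c₃ ≠ 0)
    (hsum : c₂ + c₄ = 1) (hprod : c₂ * c₄ ≠ 0) :
    ∀ y : ℝ, 0 < y → ∀ z : ℝ, 0 < z →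
      (c₁ * y ^ c₂) * (c₃ * z ^ c₄)
          * deriv (deriv (fun t : ℝ => c₁ * t ^ c₂)) y
          * deriv (deriv (fun s : ℝ => c₃ * s ^ c₄)) z
        - (deriv (fun t : ℝ => c₁ * t ^ c₂) y
            * deriv (fun s : ℝ => c₃ * s ^ c₄) z) ^ 2 = 0 :=
  stmt_18_general c₁ c₂ c₃ c₄ hsum
end
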